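/- arXiv:1503.04782 — 6 statements merged into one kernel-verified Lean document; each statement's English description precedes it below -/
import Mathlib

section
/- Let P = P_{(a,b)} \ P_{(a',b')} with a < a' < b' < b, with labelling μ and monomial map φ as defined. Then the polyomino ideal I_P (generated by all inner 2-minors of P) is contained in the kernel of φ. -/
open MvPolynomial

/-- Componentwise strict inequality on lattice points of `ℕ²`. -/
def strictLt (u v : ℕ × ℕ) : Prop := u.1 < v.1 ∧ u.2 < v.2

/-- The vertex set of the polyomino `P = P_{(a,b)} \ P_{(a',b')}`:
all lattice points of `[a,b]` except the interior vertices of `[a',b']`. -/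
def vertexSet (a a' b' b : ℕ × ℕ) : Set (ℕ × ℕ) :=
  {v | a.1 ≤ v.1 ∧ v.1 ≤ b.1 ∧ a.2 ≤ v.2 ∧ v.2 ≤ b.2 ∧
       ¬(a'.1 < v.1 ∧ v.1 < b'.1 ∧ a'.2 < v.2 ∧ v.2 < b'.2)}

/-- The unit cell with lower-left corner `v` is a cell of the rectangle `[c,d]`. -/
def isCellOf (c d v : ℕ × ℕ) : Prop :=
  c.1 ≤ v.1 ∧ v.1 + 1 ≤ d.1 ∧ c.2 ≤ v.2 ∧ v.2 + 1 ≤ d.2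

/-- The unit cell with lower-left corner `v` is a cell of `P = P_{(a,b)} \ P_{(a',b')}`. -/
def isCellOfP (a a' b' b v : ℕ × ℕ) : Prop :=
  isCellOf a b v ∧ ¬ isCellOf a' b' v

/-- `[c,d]` is an inner interval of `P = P_{(a,b)} \ P_{(a',b')}`:
`c < d` componentwise and every unit cell inside `[c,d]` is a cell of `P`. -/
def isInnerInterval (a a' b' b c d : ℕ × ℕ) : Prop :=
  c.1 < d.1 ∧ c.2 < d.2 ∧ ∀ v : ℕ × ℕ, isCellOf c d v → isCellOfP a a' b' b v

/-- The labelling `μ : V(P) → ℤ` of the paper: `1` on the lower-left and upper-right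
corner rectangles, `2` on the upper-left and lower-right corner rectangles, and
increasing values anti-clockwise along the four strips around the removed rectangle. -/
def muLabel (a a' b' b v : ℕ × ℕ) : ℤ :=
  if a.1 ≤ v.1 ∧ v.1 ≤ a'.1 ∧ a.2 ≤ v.2 ∧ v.2 ≤ a'.2 then 1
  else if b'.1 ≤ v.1 ∧ v.1 ≤ b.1 ∧ b'.2 ≤ v.2 ∧ v.2 ≤ b.2 then 1
  else if a.1 ≤ v.1 ∧ v.1 ≤ a'.1 ∧ b'.2 ≤ v.2 ∧ v.2 ≤ b.2 then 2
  else if b'.1 ≤ v.1 ∧ v.1 ≤ b.1 ∧ a.2 ≤ v.2 ∧ v.2 ≤ a'.2 then 2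
  else if b'.1 ≤ v.1 ∧ v.1 ≤ b.1 ∧ a'.2 < v.2 ∧ v.2 < b'.2 then
    (v.2 : ℤ) - (a'.2 : ℤ) + ((b'.1 : ℤ) - (a'.1 : ℤ)) + 1
  else if a'.1 < v.1 ∧ v.1 < b'.1 ∧ b'.2 ≤ v.2 ∧ v.2 ≤ b.2 then
    (b'.1 : ℤ) - (v.1 : ℤ) + ((b'.1 : ℤ) - (a'.1 : ℤ)) + ((b'.2 : ℤ) - (a'.2 : ℤ))
  else if a.1 ≤ v.1 ∧ v.1 ≤ a'.1 ∧ a'.2 < v.2 ∧ v.2 < b'.2 then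
    (b'.2 : ℤ) - (v.2 : ℤ) + 2 * ((b'.1 : ℤ) - (a'.1 : ℤ)) + ((b'.2 : ℤ) - (a'.2 : ℤ)) - 1
  else if a'.1 < v.1 ∧ v.1 < b'.1 ∧ a.2 ≤ v.2 ∧ v.2 ≤ b'.2 then
    (v.1 : ℤ) - (a'.1 : ℤ) + 2
  else 0

/-- The monomial map `φ : K[x_v : v ∈ V(P)] → K[r,s,t]`, `x_v ↦ r_{v₁} s_{v₂} t_{μ(v)}`.
The target variables are indexed by `ℕ ⊕ ℕ ⊕ ℤ` (`r`-, `s`- and `t`-variables). -/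
noncomputable def phiMap (K : Type*) [Field K] (a a' b' b : ℕ × ℕ) :
    MvPolynomial (vertexSet a a' b' b) K →ₐ[K] MvPolynomial (ℕ ⊕ ℕ ⊕ ℤ) K :=
  aeval fun v => X (Sum.inl v.1.1) * X (Sum.inr (Sum.inl v.1.2)) *
    X (Sum.inr (Sum.inr (muLabel a a' b' b v.1)))

/-- The set of inner 2-minors of `P`. -/
def innerMinors (K : Type*) [Field K] (a a' b' b : ℕ × ℕ) :
    Set (MvPolynomial (vertexSet a a' b' b) K) :=
  {f | ∃ c d c' d' : vertexSet a a' b' b, isInnerInterval a a' b' b c.1 d.1 ∧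
    c'.1 = (c.1.1, d.1.2) ∧ d'.1 = (d.1.1, c.1.2) ∧
    f = X c * X d - X c' * X d'}

/-- The polyomino ideal `I_P`, generated by all inner 2-minors of `P`. -/
noncomputable def polyominoIdeal (K : Type*) [Field K] (a a' b' b : ℕ × ℕ) :
    Ideal (MvPolynomial (vertexSet a a' b' b) K) :=
  Ideal.span (innerMinors K a a' b' b)


lemma mu_left_eval (a a' b' b : ℕ × ℕ) (e1 : a'.1 < b'.1)
    {x y : ℕ} (hx : a.1 ≤ x) (hx' : x ≤ a'.1) :
    muLabel a a' b' b (x, y) =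
      (if a.2 ≤ y ∧ y ≤ a'.2 then 1
       else if b'.2 ≤ y ∧ y ≤ b.2 then 2
       else if a'.2 < y ∧ y < b'.2 then
         (b'.2 : ℤ) - (y : ℤ) + 2 * ((b'.1 : ℤ) - (a'.1 : ℤ)) + ((b'.2 : ℤ) - (a'.2 : ℤ)) - 1
       else 0) := by
  have h2 : ¬(b'.1 ≤ x ∧ x ≤ b.1 ∧ b'.2 ≤ y ∧ y ≤ b.2) := by omega
  have h4 : ¬(b'.1 ≤ x ∧ x ≤ b.1 ∧ a.2 ≤ y ∧ y ≤ a'.2) := by omega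
  have h5 : ¬(b'.1 ≤ x ∧ x ≤ b.1 ∧ a'.2 < y ∧ y < b'.2) := by omega
  have h6 : ¬(a'.1 < x ∧ x < b'.1 ∧ b'.2 ≤ y ∧ y ≤ b.2) := by omega
  have h8 : ¬(a'.1 < x ∧ x < b'.1 ∧ a.2 ≤ y ∧ y ≤ b'.2) := by omega
  unfold muLabel
  dsimp only
  rw [if_neg h2, if_neg h4, if_neg h5, if_neg h6, if_neg h8]
  split_ifs <;> omega

lemma mu_right_eval (a a' b' b : ℕ × ℕ) (e1 : a'.1 < b'.1)
    {x y : ℕ} (hx : b'.1 ≤ x) (hx' : x ≤ b.1) :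
    muLabel a a' b' b (x, y) =
      (if b'.2 ≤ y ∧ y ≤ b.2 then 1
       else if a.2 ≤ y ∧ y ≤ a'.2 then 2
       else if a'.2 < y ∧ y < b'.2 then
         (y : ℤ) - (a'.2 : ℤ) + ((b'.1 : ℤ) - (a'.1 : ℤ)) + 1
       else 0) := by
  have h1 : ¬(a.1 ≤ x ∧ x ≤ a'.1 ∧ a.2 ≤ y ∧ y ≤ a'.2) := by omega
  have h3 : ¬(a.1 ≤ x ∧ x ≤ a'.1 ∧ b'.2 ≤ y ∧ y ≤ b.2) := by omega
  have h6 : ¬(a'.1 < x ∧ x < b'.1 ∧ b'.2 ≤ y ∧ y ≤ b.2) := by omega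
  have h7 : ¬(a.1 ≤ x ∧ x ≤ a'.1 ∧ a'.2 < y ∧ y < b'.2) := by omega
  have h8 : ¬(a'.1 < x ∧ x < b'.1 ∧ a.2 ≤ y ∧ y ≤ b'.2) := by omega
  unfold muLabel
  dsimp only
  rw [if_neg h1, if_neg h3, if_neg h6, if_neg h7, if_neg h8]
  split_ifs <;> omega

lemma mu_bot_eval (a a' b' b : ℕ × ℕ) (e2 : a'.2 < b'.2)
    {x y : ℕ} (hy : a.2 ≤ y) (hy' : y ≤ a'.2) :
    muLabel a a' b' b (x, y) =
      (if a.1 ≤ x ∧ x ≤ a'.1 then 1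
       else if b'.1 ≤ x ∧ x ≤ b.1 then 2
       else if a'.1 < x ∧ x < b'.1 then (x : ℤ) - (a'.1 : ℤ) + 2
       else 0) := by
  have h2 : ¬(b'.1 ≤ x ∧ x ≤ b.1 ∧ b'.2 ≤ y ∧ y ≤ b.2) := by omega
  have h3 : ¬(a.1 ≤ x ∧ x ≤ a'.1 ∧ b'.2 ≤ y ∧ y ≤ b.2) := by omega
  have h5 : ¬(b'.1 ≤ x ∧ x ≤ b.1 ∧ a'.2 < y ∧ y < b'.2) := by omega
  have h6 : ¬(a'.1 < x ∧ x < b'.1 ∧ b'.2 ≤ y ∧ y ≤ b.2) := by omega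
  have h7 : ¬(a.1 ≤ x ∧ x ≤ a'.1 ∧ a'.2 < y ∧ y < b'.2) := by omega
  unfold muLabel
  dsimp only
  rw [if_neg h2, if_neg h3, if_neg h5, if_neg h6, if_neg h7]
  split_ifs <;> omega

lemma mu_top_eval (a a' b' b : ℕ × ℕ) (e2 : a'.2 < b'.2)
    {x y : ℕ} (hy : b'.2 ≤ y) (hy' : y ≤ b.2) :
    muLabel a a' b' b (x, y) =
      (if b'.1 ≤ x ∧ x ≤ b.1 then 1
       else if a.1 ≤ x ∧ x ≤ a'.1 then 2
       else if a'.1 < x ∧ x < b'.1 then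
         (b'.1 : ℤ) - (x : ℤ) + ((b'.1 : ℤ) - (a'.1 : ℤ)) + ((b'.2 : ℤ) - (a'.2 : ℤ))
       else 0) := by
  have h1 : ¬(a.1 ≤ x ∧ x ≤ a'.1 ∧ a.2 ≤ y ∧ y ≤ a'.2) := by omega
  have h4 : ¬(b'.1 ≤ x ∧ x ≤ b.1 ∧ a.2 ≤ y ∧ y ≤ a'.2) := by omega
  have h5 : ¬(b'.1 ≤ x ∧ x ≤ b.1 ∧ a'.2 < y ∧ y < b'.2) := by omega
  have h7 : ¬(a.1 ≤ x ∧ x ≤ a'.1 ∧ a'.2 < y ∧ y < b'.2) := by omega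
  unfold muLabel
  dsimp only
  rw [if_neg h1, if_neg h4, if_neg h5, if_neg h7]
  split_ifs <;> omega

lemma mu_const_left (a a' b' b : ℕ × ℕ) (h2 : strictLt a' b')
    {x1 x2 y : ℕ} (hx1 : a.1 ≤ x1) (hx1' : x1 ≤ a'.1) (hx2 : a.1 ≤ x2) (hx2' : x2 ≤ a'.1) :
    muLabel a a' b' b (x1, y) = muLabel a a' b' b (x2, y) := by
  rw [mu_left_eval a a' b' b h2.1 hx1 hx1', mu_left_eval a a' b' b h2.1 hx2 hx2']

lemma mu_const_right (a a' b' b : ℕ × ℕ) (h2 : strictLt a' b')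
    {x1 x2 y : ℕ} (hx1 : b'.1 ≤ x1) (hx1' : x1 ≤ b.1) (hx2 : b'.1 ≤ x2) (hx2' : x2 ≤ b.1) :
    muLabel a a' b' b (x1, y) = muLabel a a' b' b (x2, y) := by
  rw [mu_right_eval a a' b' b h2.1 hx1 hx1', mu_right_eval a a' b' b h2.1 hx2 hx2']

lemma mu_const_bot (a a' b' b : ℕ × ℕ) (h2 : strictLt a' b')
    {x y1 y2 : ℕ} (hy1 : a.2 ≤ y1) (hy1' : y1 ≤ a'.2) (hy2 : a.2 ≤ y2) (hy2' : y2 ≤ a'.2) :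
    muLabel a a' b' b (x, y1) = muLabel a a' b' b (x, y2) := by
  rw [mu_bot_eval a a' b' b h2.2 hy1 hy1', mu_bot_eval a a' b' b h2.2 hy2 hy2']

lemma mu_const_top (a a' b' b : ℕ × ℕ) (h2 : strictLt a' b')
    {x y1 y2 : ℕ} (hy1 : b'.2 ≤ y1) (hy1' : y1 ≤ b.2) (hy2 : b'.2 ≤ y2) (hy2' : y2 ≤ b.2) :
    muLabel a a' b' b (x, y1) = muLabel a a' b' b (x, y2) := by
  rw [mu_top_eval a a' b' b h2.2 hy1 hy1', mu_top_eval a a' b' b h2.2 hy2 hy2']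

/-- for `P = P_{(a,b)} \ P_{(a',b')}` with `a < a' < b' < b`, the polyomino
ideal `I_P` (generated by the inner 2-minors of `P`) is contained in the kernel of the
monomial map `φ`, `x_v ↦ r_{v₁}s_{v₂}t_{μ(v)}`. -/
theorem stmt1 {K : Type*} [Field K] (a a' b' b : ℕ × ℕ)
    (h1 : strictLt a a') (h2 : strictLt a' b') (h3 : strictLt b' b) :
    polyominoIdeal K a a' b' b ≤ RingHom.ker (phiMap K a a' b' b) := by
  rw [polyominoIdeal, Ideal.span_le]
  rintro f ⟨⟨⟨u1, v1⟩, hcV⟩, ⟨⟨u2, v2⟩, hdV⟩, ⟨⟨x1, y2⟩, hc'V⟩, ⟨⟨x2, y1⟩, hd'V⟩,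
    ⟨hI1, hI2, hI3⟩, hc', hd', rfl⟩
  simp only [Prod.mk.injEq] at hc' hd'
  obtain ⟨rfl, rfl⟩ := hc'
  obtain ⟨rfl, rfl⟩ := hd'
  have hcb := hcV
  have hdb := hdV
  simp only [vertexSet, Set.mem_setOf_eq] at hcb hdb
  obtain ⟨hcx1, hcx2, hcy1, hcy2, -⟩ := hcb
  obtain ⟨hdx1, hdx2, hdy1, hdy2, -⟩ := hdb
  try dsimp only at hI1 hI2
  obtain ⟨ha1, ha2⟩ := h1
  obtain ⟨hb1, hb2⟩ := h2
  obtain ⟨hc1, hc2⟩ := h3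
  have hband : x2 ≤ a'.1 ∨ b'.1 ≤ x1 ∨ y2 ≤ a'.2 ∨ b'.2 ≤ y1 := by
    by_contra h
    push_neg at h
    obtain ⟨hA, hB, hC, hD⟩ := h
    have hcell : isCellOf (x1, y1) (x2, y2) (max x1 a'.1, max y1 a'.2) := by
      refine ⟨?_, ?_, ?_, ?_⟩ <;> dsimp only <;> omega
    obtain ⟨-, hnot⟩ := hI3 _ hcell
    exact hnot ⟨by dsimp only; omega, by dsimp only; omega, by dsimp only; omega, by dsimp only; omega⟩
  simp only [SetLike.mem_coe, RingHom.mem_ker, map_sub, map_mul, sub_eq_zero,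
    phiMap, aeval_X]
  try dsimp only
  rcases hband with hb | hb | hb | hb
  · rw [mu_const_left a a' b' b ⟨hb1, hb2⟩ hcx1 (by omega) hdx1 (by omega)
        (x1 := x1) (x2 := x2) (y := y1),
      mu_const_left a a' b' b ⟨hb1, hb2⟩ hcx1 (by omega) hdx1 (by omega)
        (x1 := x1) (x2 := x2) (y := y2)]
    ring
  · rw [mu_const_right a a' b' b ⟨hb1, hb2⟩ hb hcx2 (by omega) hdx2
        (x1 := x1) (x2 := x2) (y := y1),
      mu_const_right a a' b' b ⟨hb1, hb2⟩ hb hcx2 (by omega) hdx2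
        (x1 := x1) (x2 := x2) (y := y2)]
    ring
  · rw [mu_const_bot a a' b' b ⟨hb1, hb2⟩ hcy1 (by omega) hdy1 (by omega)
        (y1 := y1) (y2 := y2) (x := x1),
      mu_const_bot a a' b' b ⟨hb1, hb2⟩ hcy1 (by omega) hdy1 (by omega)
        (y1 := y1) (y2 := y2) (x := x2)]
    ring
  · rw [mu_const_top a a' b' b ⟨hb1, hb2⟩ hb hcy2 (by omega) hdy2
        (y1 := y1) (y2 := y2) (x := x1),
      mu_const_top a a' b' b ⟨hb1, hb2⟩ hb hcy2 (by omega) hdy2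
        (y1 := y1) (y2 := y2) (x := x2)]
    ring
end

section
/- Let P = P_{(a,b)} \ P_{(a',b')} with a < a' < b' < b and labelling μ as defined. If v₁, v₂, v₃, v₄ ∈ V(P) are the four corners of an interval with v₁, v₂ diagonal and v₃, v₄ anti-diagonal corners, and the interval [v₁,v₂] contains the removed rectangle P_{(a',b')} (i.e., a' and b' lie strictly inside [v₁,v₂]), then μ(v₁)·μ(v₂) ≠ μ(v₃)·μ(v₄); in fact {μ(v₁),μ(v₂)} = {1,1} and {μ(v₃),μ(v₄)} = {2,2}. -/
open MvPolynomial

/-- if `v₁, v₂` are the diagonal corners of an interval that strictly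
contains the removed rectangle `[a',b']`, and `v₃ = (v₁₁, v₂₂)`, `v₄ = (v₂₁, v₁₂)` are the
anti-diagonal corners, then `μ(v₁) = μ(v₂) = 1`, `μ(v₃) = μ(v₄) = 2`, and in particular
`μ(v₁)·μ(v₂) ≠ μ(v₃)·μ(v₄)`. -/
theorem stmt3 (a a' b' b : ℕ × ℕ)
    (h1 : strictLt a a') (h2 : strictLt a' b') (h3 : strictLt b' b)
    (v₁ v₂ : ℕ × ℕ) (hv₁ : v₁ ∈ vertexSet a a' b' b) (hv₂ : v₂ ∈ vertexSet a a' b' b)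
    (hc1 : v₁.1 < a'.1) (hc2 : v₁.2 < a'.2) (hc3 : b'.1 < v₂.1) (hc4 : b'.2 < v₂.2) :
    muLabel a a' b' b v₁ = 1 ∧ muLabel a a' b' b v₂ = 1 ∧
      muLabel a a' b' b (v₁.1, v₂.2) = 2 ∧ muLabel a a' b' b (v₂.1, v₁.2) = 2 ∧
      muLabel a a' b' b v₁ * muLabel a a' b' b v₂ ≠
        muLabel a a' b' b (v₁.1, v₂.2) * muLabel a a' b' b (v₂.1, v₁.2) := by
  obtain ⟨p1,p2,p3,p4,-⟩ := hv₁
  obtain ⟨q1,q2,q3,q4,-⟩ := hv₂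
  obtain ⟨A1,A2⟩:=h1; obtain ⟨B1,B2⟩:=h2; obtain ⟨C1,C2⟩:=h3
  have e1 : muLabel a a' b' b v₁ = 1 := by
    simp only [muLabel]; rw [if_pos (by omega)]
  have e2 : muLabel a a' b' b v₂ = 1 := by
    simp only [muLabel]; rw [if_neg (by omega), if_pos (by omega)]
  have e3 : muLabel a a' b' b (v₁.1, v₂.2) = 2 := by
    simp only [muLabel]; rw [if_neg (by omega), if_neg (by omega), if_pos (by omega)]
  have e4 : muLabel a a' b' b (v₂.1, v₁.2) = 2 := by
    simp only [muLabel]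
    rw [if_neg (by omega), if_neg (by omega), if_neg (by omega), if_pos (by omega)]
  exact ⟨e1, e2, e3, e4, by rw [e1,e2,e3,e4]; norm_num⟩
end

section
/- Let P = P_{(a,b)} \ P_{(a',b')} with a < a' < b' < b, with labelling μ and monomial map φ(x_v) = r_{v₁}s_{v₂}t_{μ(v)}. Every binomial x_{v₁}x_{v₂} − x_{v₃}x_{v₄} of degree 2 in ker φ (with the two monomials distinct) is, after possibly swapping names, an inner 2-minor of P: the vertices v₁,v₂,v₃,v₄ are the corners of an inner interval of P with v₁,v₂ diagonal and v₃,v₄ anti-diagonal. -/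
open MvPolynomial

theorem mu_ll {a a' b' b v : ℕ × ℕ} (q1 : a.1 ≤ v.1) (q2 : a.2 ≤ v.2)
    (q3 : v.1 ≤ a'.1) (q4 : v.2 ≤ a'.2) : muLabel a a' b' b v = 1 := by
  unfold muLabel; split_ifs <;> omega

theorem mu_ur {a a' b' b v : ℕ × ℕ} (q1 : b'.1 ≤ v.1) (q2 : v.1 ≤ b.1)
    (q3 : b'.2 ≤ v.2) (q4 : v.2 ≤ b.2) (s1 : a'.1 < b'.1) (s2 : a'.2 < b'.2) :
    muLabel a a' b' b v = 1 := by
  unfold muLabel; split_ifs <;> omega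

theorem mu_ul {a a' b' b v : ℕ × ℕ} (q1 : a.1 ≤ v.1) (q2 : v.1 ≤ a'.1)
    (q3 : b'.2 ≤ v.2) (q4 : v.2 ≤ b.2) (s1 : a'.1 < b'.1) (s2 : a'.2 < b'.2) :
    muLabel a a' b' b v = 2 := by
  unfold muLabel; split_ifs <;> omega

theorem mu_lr {a a' b' b v : ℕ × ℕ} (q1 : b'.1 ≤ v.1) (q2 : v.1 ≤ b.1)
    (q3 : a.2 ≤ v.2) (q4 : v.2 ≤ a'.2) (s1 : a'.1 < b'.1) (s2 : a'.2 < b'.2) :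
    muLabel a a' b' b v = 2 := by
  unfold muLabel; split_ifs <;> omega

theorem mu_right {a a' b' b v : ℕ × ℕ} (q1 : b'.1 ≤ v.1) (q2 : v.1 ≤ b.1)
    (q3 : a'.2 < v.2) (q4 : v.2 < b'.2) (s1 : a'.1 < b'.1) :
    muLabel a a' b' b v = (v.2 : ℤ) - (a'.2 : ℤ) + ((b'.1 : ℤ) - (a'.1 : ℤ)) + 1 := by
  unfold muLabel; split_ifs <;> omega

theorem mu_top {a a' b' b v : ℕ × ℕ} (q1 : a'.1 < v.1) (q2 : v.1 < b'.1)
    (q3 : b'.2 ≤ v.2) (q4 : v.2 ≤ b.2) :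
    muLabel a a' b' b v = (b'.1 : ℤ) - (v.1 : ℤ) + ((b'.1 : ℤ) - (a'.1 : ℤ)) + ((b'.2 : ℤ) - (a'.2 : ℤ)) := by
  unfold muLabel; split_ifs <;> omega

theorem mu_left {a a' b' b v : ℕ × ℕ} (q1 : a.1 ≤ v.1) (q2 : v.1 ≤ a'.1)
    (q3 : a'.2 < v.2) (q4 : v.2 < b'.2) (s1 : a'.1 < b'.1) :
    muLabel a a' b' b v = (b'.2 : ℤ) - (v.2 : ℤ) + 2 * ((b'.1 : ℤ) - (a'.1 : ℤ)) + ((b'.2 : ℤ) - (a'.2 : ℤ)) - 1 := by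
  unfold muLabel; split_ifs <;> omega

theorem mu_bottom {a a' b' b v : ℕ × ℕ} (q1 : a'.1 < v.1) (q2 : v.1 < b'.1)
    (q3 : a.2 ≤ v.2) (q4 : v.2 ≤ a'.2) (s2 : a'.2 < b'.2) :
    muLabel a a' b' b v = (v.1 : ℤ) - (a'.1 : ℤ) + 2 := by
  unfold muLabel; split_ifs <;> omega

theorem mu_key (a a' b' b : ℕ × ℕ) (h1 : strictLt a a') (h2 : strictLt a' b') (h3 : strictLt b' b)
    (c d : ℕ × ℕ) (hcd1 : c.1 < d.1) (hcd2 : c.2 < d.2)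
    (hc : c ∈ vertexSet a a' b' b) (hd : d ∈ vertexSet a a' b' b)
    (hc' : (c.1, d.2) ∈ vertexSet a a' b' b) (hd' : (d.1, c.2) ∈ vertexSet a a' b' b)
    (hmu : (muLabel a a' b' b c = muLabel a a' b' b (c.1, d.2) ∧
            muLabel a a' b' b d = muLabel a a' b' b (d.1, c.2)) ∨
           (muLabel a a' b' b c = muLabel a a' b' b (d.1, c.2) ∧
            muLabel a a' b' b d = muLabel a a' b' b (c.1, d.2))) :
    isInnerInterval a a' b' b c d := by
  obtain ⟨ha1, ha2⟩ := h1
  obtain ⟨hb1, hb2⟩ := h2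
  obtain ⟨hg1, hg2⟩ := h3
  obtain ⟨c1a, c1b, c2a, c2b, cno⟩ := hc
  obtain ⟨d1a, d1b, d2a, d2b, dno⟩ := hd
  have hcc : a.1 ≤ c.1 ∧ c.1 ≤ b.1 ∧ a.2 ≤ d.2 ∧ d.2 ≤ b.2 ∧
      ¬(a'.1 < c.1 ∧ c.1 < b'.1 ∧ a'.2 < d.2 ∧ d.2 < b'.2) := hc'
  have hdd : a.1 ≤ d.1 ∧ d.1 ≤ b.1 ∧ a.2 ≤ c.2 ∧ c.2 ≤ b.2 ∧
      ¬(a'.1 < d.1 ∧ d.1 < b'.1 ∧ a'.2 < c.2 ∧ c.2 < b'.2) := hd'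
  obtain ⟨-, -, -, -, pno⟩ := hcc
  obtain ⟨-, -, -, -, qno⟩ := hdd
  refine ⟨hcd1, hcd2, fun v hv => ?_⟩
  obtain ⟨hv1, hv2, hv3, hv4⟩ := hv
  refine ⟨⟨by omega, by omega, by omega, by omega⟩, ?_⟩
  rintro ⟨g1, g2, g3, g4⟩
  have oL : c.1 < b'.1 := by omega
  have oR : a'.1 < d.1 := by omega
  have oB : c.2 < b'.2 := by omega
  have oT : a'.2 < d.2 := by omega
  have hmain : (c.1 ≤ a'.1 ∧ b'.1 ≤ d.1) ∨ (c.2 ≤ a'.2 ∧ b'.2 ≤ d.2) := by omega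
  rcases hmain with ⟨hL, hR⟩ | ⟨hB, hT⟩
  · by_cases hBB : c.2 ≤ a'.2 <;> by_cases hTT : b'.2 ≤ d.2
    · have m1 : muLabel a a' b' b c = 1 := mu_ll c1a c2a hL hBB
      have m2 : muLabel a a' b' b d = 1 := mu_ur hR d1b hTT d2b hb1 hb2
      have m3 : muLabel a a' b' b (c.1, d.2) = 2 := mu_ul c1a hL hTT d2b hb1 hb2
      have m4 : muLabel a a' b' b (d.1, c.2) = 2 := mu_lr hR d1b c2a hBB hb1 hb2
      rw [m1, m2, m3, m4] at hmu; omega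
    · have m1 : muLabel a a' b' b c = 1 := mu_ll c1a c2a hL hBB
      have m2 : muLabel a a' b' b d =
          (d.2 : ℤ) - (a'.2 : ℤ) + ((b'.1 : ℤ) - (a'.1 : ℤ)) + 1 :=
        mu_right hR d1b oT (by omega) hb1
      have m3 : muLabel a a' b' b (c.1, d.2) =
          (b'.2 : ℤ) - (d.2 : ℤ) + 2 * ((b'.1 : ℤ) - (a'.1 : ℤ)) + ((b'.2 : ℤ) - (a'.2 : ℤ)) - 1 :=
        mu_left c1a hL oT (by omega) hb1
      have m4 : muLabel a a' b' b (d.1, c.2) = 2 := mu_lr hR d1b c2a hBB hb1 hb2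
      rw [m1, m2, m3, m4] at hmu; omega
    · have m1 : muLabel a a' b' b c =
          (b'.2 : ℤ) - (c.2 : ℤ) + 2 * ((b'.1 : ℤ) - (a'.1 : ℤ)) + ((b'.2 : ℤ) - (a'.2 : ℤ)) - 1 :=
        mu_left c1a hL (by omega) oB hb1
      have m2 : muLabel a a' b' b d = 1 := mu_ur hR d1b hTT d2b hb1 hb2
      have m3 : muLabel a a' b' b (c.1, d.2) = 2 := mu_ul c1a hL hTT d2b hb1 hb2
      have m4 : muLabel a a' b' b (d.1, c.2) =
          (c.2 : ℤ) - (a'.2 : ℤ) + ((b'.1 : ℤ) - (a'.1 : ℤ)) + 1 :=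
        mu_right hR d1b (by omega) oB hb1
      rw [m1, m2, m3, m4] at hmu; omega
    · have m1 : muLabel a a' b' b c =
          (b'.2 : ℤ) - (c.2 : ℤ) + 2 * ((b'.1 : ℤ) - (a'.1 : ℤ)) + ((b'.2 : ℤ) - (a'.2 : ℤ)) - 1 :=
        mu_left c1a hL (by omega) oB hb1
      have m2 : muLabel a a' b' b d =
          (d.2 : ℤ) - (a'.2 : ℤ) + ((b'.1 : ℤ) - (a'.1 : ℤ)) + 1 :=
        mu_right hR d1b oT (by omega) hb1
      have m3 : muLabel a a' b' b (c.1, d.2) =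
          (b'.2 : ℤ) - (d.2 : ℤ) + 2 * ((b'.1 : ℤ) - (a'.1 : ℤ)) + ((b'.2 : ℤ) - (a'.2 : ℤ)) - 1 :=
        mu_left c1a hL oT (by omega) hb1
      have m4 : muLabel a a' b' b (d.1, c.2) =
          (c.2 : ℤ) - (a'.2 : ℤ) + ((b'.1 : ℤ) - (a'.1 : ℤ)) + 1 :=
        mu_right hR d1b (by omega) oB hb1
      rw [m1, m2, m3, m4] at hmu; omega
  · by_cases hLL : c.1 ≤ a'.1 <;> by_cases hRR : b'.1 ≤ d.1
    · have m1 : muLabel a a' b' b c = 1 := mu_ll c1a c2a hLL hB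
      have m2 : muLabel a a' b' b d = 1 := mu_ur hRR d1b hT d2b hb1 hb2
      have m3 : muLabel a a' b' b (c.1, d.2) = 2 := mu_ul c1a hLL hT d2b hb1 hb2
      have m4 : muLabel a a' b' b (d.1, c.2) = 2 := mu_lr hRR d1b c2a hB hb1 hb2
      rw [m1, m2, m3, m4] at hmu; omega
    · have m1 : muLabel a a' b' b c = 1 := mu_ll c1a c2a hLL hB
      have m2 : muLabel a a' b' b d =
          (b'.1 : ℤ) - (d.1 : ℤ) + ((b'.1 : ℤ) - (a'.1 : ℤ)) + ((b'.2 : ℤ) - (a'.2 : ℤ)) :=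
        mu_top oR (by omega) hT d2b
      have m3 : muLabel a a' b' b (c.1, d.2) = 2 := mu_ul c1a hLL hT d2b hb1 hb2
      have m4 : muLabel a a' b' b (d.1, c.2) = (d.1 : ℤ) - (a'.1 : ℤ) + 2 :=
        mu_bottom oR (by omega) c2a hB hb2
      rw [m1, m2, m3, m4] at hmu; omega
    · have m1 : muLabel a a' b' b c = (c.1 : ℤ) - (a'.1 : ℤ) + 2 :=
        mu_bottom (by omega) oL c2a hB hb2
      have m2 : muLabel a a' b' b d = 1 := mu_ur hRR d1b hT d2b hb1 hb2
      have m3 : muLabel a a' b' b (c.1, d.2) =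
          (b'.1 : ℤ) - (c.1 : ℤ) + ((b'.1 : ℤ) - (a'.1 : ℤ)) + ((b'.2 : ℤ) - (a'.2 : ℤ)) :=
        mu_top (by omega) oL hT d2b
      have m4 : muLabel a a' b' b (d.1, c.2) = 2 := mu_lr hRR d1b c2a hB hb1 hb2
      rw [m1, m2, m3, m4] at hmu; omega
    · have m1 : muLabel a a' b' b c = (c.1 : ℤ) - (a'.1 : ℤ) + 2 :=
        mu_bottom (by omega) oL c2a hB hb2
      have m2 : muLabel a a' b' b d =
          (b'.1 : ℤ) - (d.1 : ℤ) + ((b'.1 : ℤ) - (a'.1 : ℤ)) + ((b'.2 : ℤ) - (a'.2 : ℤ)) :=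
        mu_top oR (by omega) hT d2b
      have m3 : muLabel a a' b' b (c.1, d.2) =
          (b'.1 : ℤ) - (c.1 : ℤ) + ((b'.1 : ℤ) - (a'.1 : ℤ)) + ((b'.2 : ℤ) - (a'.2 : ℤ)) :=
        mu_top (by omega) oL hT d2b
      have m4 : muLabel a a' b' b (d.1, c.2) = (d.1 : ℤ) - (a'.1 : ℤ) + 2 :=
        mu_bottom oR (by omega) c2a hB hb2
      rw [m1, m2, m3, m4] at hmu; omega

def Concl (a a' b' b p1 p2 p3 p4 : ℕ × ℕ) : Prop :=
  ∃ c d : ℕ × ℕ, isInnerInterval a a' b' b c d ∧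
    ((({p1, p2} : Multiset (ℕ × ℕ)) = {c, d} ∧
        ({p3, p4} : Multiset (ℕ × ℕ)) = {(c.1, d.2), (d.1, c.2)}) ∨
      (({p3, p4} : Multiset (ℕ × ℕ)) = {c, d} ∧
        ({p1, p2} : Multiset (ℕ × ℕ)) = {(c.1, d.2), (d.1, c.2)}))

lemma concl_swap34 {a a' b' b p1 p2 p3 p4 : ℕ × ℕ} (h : Concl a a' b' b p1 p2 p4 p3) :
    Concl a a' b' b p1 p2 p3 p4 := by
  obtain ⟨c, d, hI, hcase⟩ := h
  exact ⟨c, d, hI, by rwa [Multiset.pair_comm p4 p3] at hcase⟩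

lemma concl_swap12 {a a' b' b p1 p2 p3 p4 : ℕ × ℕ} (h : Concl a a' b' b p2 p1 p3 p4) :
    Concl a a' b' b p1 p2 p3 p4 := by
  obtain ⟨c, d, hI, hcase⟩ := h
  exact ⟨c, d, hI, by rwa [Multiset.pair_comm p2 p1] at hcase⟩

lemma core2 (a a' b' b : ℕ × ℕ) (h1 : strictLt a a') (h2 : strictLt a' b') (h3 : strictLt b' b)
    (v₁ v₂ v₃ v₄ : vertexSet a a' b' b)
    (e3 : v₃.1 = (v₁.1.1, v₂.1.2)) (e4 : v₄.1 = (v₂.1.1, v₁.1.2))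
    (hxlt : v₁.1.1 < v₂.1.1) (hy : v₁.1.2 ≠ v₂.1.2)
    (ht : (muLabel a a' b' b v₁.1 = muLabel a a' b' b v₃.1 ∧
           muLabel a a' b' b v₂.1 = muLabel a a' b' b v₄.1) ∨
          (muLabel a a' b' b v₁.1 = muLabel a a' b' b v₄.1 ∧
           muLabel a a' b' b v₂.1 = muLabel a a' b' b v₃.1)) :
    Concl a a' b' b v₁.1 v₂.1 v₃.1 v₄.1 := by
  rw [e3, e4] at ht
  rcases lt_or_gt_of_ne hy with hylt | hygt
  · refine ⟨v₁.1, v₂.1, ?_, Or.inl ⟨rfl, by rw [e3, e4]⟩⟩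
    exact mu_key a a' b' b h1 h2 h3 v₁.1 v₂.1 hxlt hylt v₁.2 v₂.2
      (e3 ▸ v₃.2) (e4 ▸ v₄.2) ht
  · refine ⟨v₃.1, v₄.1, ?_, Or.inr ⟨rfl, ?_⟩⟩
    · have hc' : ((v₃.1.1, v₄.1.2) : ℕ × ℕ) ∈ vertexSet a a' b' b := by
        rw [e3, e4]; exact v₁.2
      have hd' : ((v₄.1.1, v₃.1.2) : ℕ × ℕ) ∈ vertexSet a a' b' b := by
        rw [e3, e4]; exact v₂.2
      refine mu_key a a' b' b h1 h2 h3 v₃.1 v₄.1 ?_ ?_ v₃.2 v₄.2 hc' hd' ?_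
      · rw [e3, e4]; exact hxlt
      · rw [e3, e4]; exact hygt
      · rw [e3, e4]
        rcases ht with ⟨u1, u2⟩ | ⟨u1, u2⟩
        · exact Or.inl ⟨u1.symm, u2.symm⟩
        · exact Or.inr ⟨u2.symm, u1.symm⟩
    · rw [e3, e4]

lemma core1 (a a' b' b : ℕ × ℕ) (h1 : strictLt a a') (h2 : strictLt a' b') (h3 : strictLt b' b)
    (v₁ v₂ v₃ v₄ : vertexSet a a' b' b)
    (e3 : v₃.1 = (v₁.1.1, v₂.1.2)) (e4 : v₄.1 = (v₂.1.1, v₁.1.2))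
    (hne13 : ¬(v₁ = v₃ ∧ v₂ = v₄)) (hne14 : ¬(v₁ = v₄ ∧ v₂ = v₃))
    (ht : (muLabel a a' b' b v₁.1 = muLabel a a' b' b v₃.1 ∧
           muLabel a a' b' b v₂.1 = muLabel a a' b' b v₄.1) ∨
          (muLabel a a' b' b v₁.1 = muLabel a a' b' b v₄.1 ∧
           muLabel a a' b' b v₂.1 = muLabel a a' b' b v₃.1)) :
    Concl a a' b' b v₁.1 v₂.1 v₃.1 v₄.1 := by
  have hx : v₁.1.1 ≠ v₂.1.1 := by
    intro hEq
    refine hne14 ⟨(Subtype.ext ?_).symm, (Subtype.ext ?_).symm⟩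
    · rw [e4]; simp [Prod.ext_iff, hEq]
    · rw [e3]; simp [Prod.ext_iff, hEq]
  have hy : v₁.1.2 ≠ v₂.1.2 := by
    intro hEq
    refine hne13 ⟨(Subtype.ext ?_).symm, (Subtype.ext ?_).symm⟩
    · rw [e3]; simp [Prod.ext_iff, hEq]
    · rw [e4]; simp [Prod.ext_iff, hEq]
  rcases lt_or_gt_of_ne hx with h | h
  · exact core2 a a' b' b h1 h2 h3 v₁ v₂ v₃ v₄ e3 e4 h hy ht
  · have := core2 a a' b' b h1 h2 h3 v₂ v₁ v₄ v₃ e4 e3 h hy.symm (by tauto)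
    exact concl_swap12 (concl_swap34 this)

theorem X_mul_X_inj {σ : Type*} {K : Type*} [Field K] {i j k l : σ}
    (h : (X i * X j : MvPolynomial σ K) = X k * X l) :
    (i = k ∧ j = l) ∨ (i = l ∧ j = k) := by
  have hX : ∀ p : σ, (X p : MvPolynomial σ K) = monomial (Finsupp.single p 1) 1 := fun p => by
    rw [← X_pow_eq_monomial, pow_one]
  rw [hX i, hX j, hX k, hX l, monomial_mul, monomial_mul, monomial_eq_monomial_iff] at h
  rcases h with ⟨hF, -⟩ | ⟨h0, -⟩
  · rw [Finsupp.single_add_single_eq_single_add_single one_ne_zero one_ne_zero] at hF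
    rcases hF with ⟨hh1, hh2⟩ | ⟨-, hh1, hh2⟩ | ⟨habs, -⟩
    · exact Or.inl ⟨hh1, hh2⟩
    · exact Or.inr ⟨hh1, hh2⟩
    · exact absurd habs (by simp)
  · exact absurd h0 (by simp)

/-- every quadratic binomial `x_{v₁}x_{v₂} - x_{v₃}x_{v₄}` in the kernel of
the monomial map `φ` (with the two monomials distinct) is, after possibly swapping the
roles of the two monomials, an inner 2-minor of `P`: there is an inner interval `[c,d]`
of `P` such that one pair among `{v₁,v₂}`, `{v₃,v₄}` consists of its diagonal corners and
the other pair of its anti-diagonal corners. -/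
theorem stmt4 {K : Type*} [Field K] (a a' b' b : ℕ × ℕ)
    (h1 : strictLt a a') (h2 : strictLt a' b') (h3 : strictLt b' b)
    (v₁ v₂ v₃ v₄ : vertexSet a a' b' b)
    (hne : (X v₁ * X v₂ : MvPolynomial (vertexSet a a' b' b) K) ≠ X v₃ * X v₄)
    (hker : phiMap K a a' b' b (X v₁ * X v₂ - X v₃ * X v₄) = 0) :
    ∃ c d : ℕ × ℕ, isInnerInterval a a' b' b c d ∧
      ((({v₁.1, v₂.1} : Multiset (ℕ × ℕ)) = {c, d} ∧
          ({v₃.1, v₄.1} : Multiset (ℕ × ℕ)) = {(c.1, d.2), (d.1, c.2)}) ∨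
        (({v₃.1, v₄.1} : Multiset (ℕ × ℕ)) = {c, d} ∧
          ({v₁.1, v₂.1} : Multiset (ℕ × ℕ)) = {(c.1, d.2), (d.1, c.2)})) := by

  rw [map_sub, sub_eq_zero] at hker
  simp only [phiMap, map_mul, aeval_X] at hker
  -- extract the three coordinate equalities
  have hr' : (X v₁.1.1 * X v₂.1.1 : MvPolynomial ℕ K) = X v₃.1.1 * X v₄.1.1 := by
    have := congrArg (aeval (Sum.elim X fun _ => (1 : MvPolynomial ℕ K))) hker
    simpa using this
  have hs' : (X v₁.1.2 * X v₂.1.2 : MvPolynomial ℕ K) = X v₃.1.2 * X v₄.1.2 := by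
    have := congrArg
      (aeval (Sum.elim (fun _ => (1 : MvPolynomial ℕ K)) (Sum.elim X fun _ => 1))) hker
    simpa using this
  have ht' : (X (muLabel a a' b' b v₁.1) * X (muLabel a a' b' b v₂.1) : MvPolynomial ℤ K) =
      X (muLabel a a' b' b v₃.1) * X (muLabel a a' b' b v₄.1) := by
    have := congrArg
      (aeval (Sum.elim (fun _ => (1 : MvPolynomial ℤ K)) (Sum.elim (fun _ => 1) X))) hker
    simpa using this
  have hr := X_mul_X_inj hr'
  have hs := X_mul_X_inj hs'
  have ht := X_mul_X_inj ht'
  have hne13 : ¬(v₁ = v₃ ∧ v₂ = v₄) := by rintro ⟨rfl, rfl⟩; exact hne rfl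
  have hne14 : ¬(v₁ = v₄ ∧ v₂ = v₃) := by rintro ⟨rfl, rfl⟩; exact hne (mul_comm _ _)
  show Concl a a' b' b v₁.1 v₂.1 v₃.1 v₄.1
  rcases hr with ⟨r13, r24⟩ | ⟨r14, r23⟩ <;> rcases hs with ⟨s13, s24⟩ | ⟨s14, s23⟩
  · exact absurd ⟨Subtype.ext (Prod.ext r13 s13), Subtype.ext (Prod.ext r24 s24)⟩ hne13
  · exact core1 a a' b' b h1 h2 h3 v₁ v₂ v₃ v₄
      (Prod.ext r13.symm s23.symm) (Prod.ext r24.symm s14.symm) hne13 hne14 ht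
  · exact concl_swap34 (core1 a a' b' b h1 h2 h3 v₁ v₂ v₄ v₃
      (Prod.ext r14.symm s24.symm) (Prod.ext r23.symm s13.symm) hne14 hne13 (by tauto))
  · exact absurd ⟨Subtype.ext (Prod.ext r14 s14), Subtype.ext (Prod.ext r23 s23)⟩ hne14
end

section
/- Let P = P_{(a,b)} \ P_{(a',b')} with a < a' < b' < b. Then the polyomino ideal I_P equals the kernel J_P of the monomial map φ(x_v) = r_{v₁}s_{v₂}t_{μ(v)}; in particular I_P is a prime ideal and K[P] = S/I_P is isomorphic to the toric ring K[r_{v₁}s_{v₂}t_{μ(v)} : v ∈ V(P)]. -/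
open MvPolynomial

/-!
The map `φ` is multigraded: `x_v` has weight `r_{v₁} s_{v₂} t_{μ(v)}`, so `J_P` is spanned by the
binomials `x^M - x^N` of monomials of equal weight, i.e. with the same multisets of abscissae,
ordinates and labels. An inner interval lies in one of the four bands `x ≤ a'₁`, `x ≥ b'₁`,
`y ≤ a'₂`, `y ≥ b'₂` around the hole, and `μ` is constant along the rows of the left and right
bands and along the columns of the lower and upper ones; hence inner 2-minors have weight zero.

Conversely, exchanging the coordinates of two vertices lying in a common band is an inner-minor
move that preserves the weight. If `M` and `N` have equal weight, one or two such moves turn `N`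
into a congruent monomial containing a prescribed vertex `v` of `M`: for a vertex of one of the
strips, its label already fixes its row or column within a band; for a corner vertex, comparing the
numbers of abscissae, ordinates and labels on each side of the hole shows that `N` meets the corner
rectangle of `v`. Cancelling `v` and inducting on the degree gives `J_P ⊆ I_P`.
-/

namespace MvPolynomial

variable {R σ τ : Type*} [CommRing R]

theorem prod_map_X_eq_monomial [DecidableEq σ] (M : Multiset σ) :
    (M.map X).prod = monomial (Multiset.toFinsupp M) (1 : R) := by
  induction M using Multiset.induction_on with
  | empty =>
    rw [Multiset.map_zero, Multiset.prod_zero, Multiset.toFinsupp_zero, monomial_zero', C_1]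
  | cons i M ih =>
    rw [Multiset.map_cons, Multiset.prod_cons, ih, ← Multiset.singleton_add,
      Multiset.toFinsupp_add, Multiset.toFinsupp_singleton, monomial_single_add, pow_one]

theorem map_prod_map_X {φ : MvPolynomial σ R →ₐ[R] MvPolynomial τ R} {W : σ → Multiset τ}
    (hφ : ∀ i, φ (X i) = ((W i).map X).prod) (M : Multiset σ) :
    φ (M.map X).prod = ((M.bind W).map X).prod := by
  rw [map_multiset_prod, Multiset.map_map, Multiset.map_bind, Multiset.prod_bind]
  exact congrArg Multiset.prod (Multiset.map_congr rfl fun i _ => hφ i)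

theorem ker_le_of_weight_eq {φ : MvPolynomial σ R →ₐ[R] MvPolynomial τ R} {W : σ → Multiset τ}
    (hφ : ∀ i, φ (X i) = ((W i).map X).prod) {I : Ideal (MvPolynomial σ R)}
    (hI : ∀ M N : Multiset σ, M.bind W = N.bind W →
      Ideal.Quotient.mk I (M.map X).prod = Ideal.Quotient.mk I (N.map X).prod) :
    RingHom.ker φ ≤ I := by
  classical
  -- `ψ` sends `X^m` to the class of any monomial of weight `m`, so that `ψ ∘ φ` is the projection.
  let ψ : MvPolynomial τ R →ₗ[R] MvPolynomial σ R ⧸ I :=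
    (basisMonomials τ R).constr R fun m =>
      if h : ∃ M : Multiset σ, Multiset.toFinsupp (M.bind W) = m then
        Ideal.Quotient.mk I (h.choose.map X).prod
      else 0
  have hψ : ψ ∘ₗ φ.toLinearMap = (Ideal.Quotient.mkₐ R I).toLinearMap := by
    refine (basisMonomials σ R).ext fun u => ?_
    obtain ⟨M, rfl⟩ := Multiset.toFinsupp.surjective u
    have hM : ∃ N : Multiset σ, Multiset.toFinsupp (N.bind W) = Multiset.toFinsupp (M.bind W) :=
      ⟨M, rfl⟩
    change ψ (φ (monomial _ 1)) = Ideal.Quotient.mk I (monomial _ 1)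
    rw [← prod_map_X_eq_monomial, map_prod_map_X hφ, prod_map_X_eq_monomial]
    change ψ (basisMonomials τ R _) = _
    simp only [ψ, Module.Basis.constr_basis, dif_pos hM]
    exact hI _ _ (Multiset.toFinsupp.injective hM.choose_spec)
  intro p hp
  rw [← Ideal.Quotient.eq_zero_iff_mem, ← Ideal.Quotient.mkₐ_eq_mk R,
    ← AlgHom.toLinearMap_apply, ← hψ, LinearMap.comp_apply, AlgHom.toLinearMap_apply,
    RingHom.mem_ker.mp hp, map_zero]

end MvPolynomial

namespace RectMinusRect

def SameSide (s t x y : ℕ) : Prop := (x ≤ s ∧ y ≤ s) ∨ (t ≤ x ∧ t ≤ y)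

instance (s t x y : ℕ) : Decidable (SameSide s t x y) :=
  inferInstanceAs (Decidable ((x ≤ s ∧ y ≤ s) ∨ (t ≤ x ∧ t ≤ y)))

theorem SameSide.symm {s t x y : ℕ} (h : SameSide s t x y) : SameSide s t y x :=
  h.imp And.symm And.symm

def ShareBand (a' b' u w : ℕ × ℕ) : Prop :=
  SameSide a'.1 b'.1 u.1 w.1 ∨ SameSide a'.2 b'.2 u.2 w.2

theorem ShareBand.symm {a' b' u w : ℕ × ℕ} (h : ShareBand a' b' u w) : ShareBand a' b' w u :=
  h.imp SameSide.symm SameSide.symm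

def IsCorner (a a' b' b u : ℕ × ℕ) : Prop :=
  muLabel a a' b' b u = 1 ∨ muLabel a a' b' b u = 2

variable {a a' b' b : ℕ × ℕ}

theorem mk_mem_vertexSet_of_shareBand {u w : ℕ × ℕ} (hu : u ∈ vertexSet a a' b' b)
    (hw : w ∈ vertexSet a a' b' b) (h : ShareBand a' b' u w) :
    (u.1, w.2) ∈ vertexSet a a' b' b := by
  simp only [vertexSet, Set.mem_ofPred_eq, ShareBand, SameSide] at *
  omega

theorem isInnerInterval_of_shareBand {c d : ℕ × ℕ} (hc : c ∈ vertexSet a a' b' b)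
    (hd : d ∈ vertexSet a a' b' b) (hx : c.1 < d.1) (hy : c.2 < d.2) (h : ShareBand a' b' c d) :
    isInnerInterval a a' b' b c d := by
  refine ⟨hx, hy, fun v hv => ?_⟩
  simp only [vertexSet, Set.mem_ofPred_eq, isCellOfP, isCellOf, ShareBand, SameSide] at *
  omega

theorem shareBand_of_isInnerInterval (h2 : strictLt a' b') {c d : ℕ × ℕ}
    (h : isInnerInterval a a' b' b c d) : ShareBand a' b' c d := by
  obtain ⟨hx, hy, hcell⟩ := h
  by_contra hne
  unfold ShareBand SameSide at hne
  have := hcell (max c.1 a'.1, max c.2 a'.2) (by unfold isCellOf; omega)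
  unfold isCellOfP isCellOf strictLt at *
  omega

theorem muLabel_spec (h2 : strictLt a' b') {u : ℕ × ℕ} (hu : u ∈ vertexSet a a' b' b) :
    (u.1 ≤ a'.1 ∧ u.2 ≤ a'.2 ∧ muLabel a a' b' b u = 1) ∨
    (b'.1 ≤ u.1 ∧ b'.2 ≤ u.2 ∧ muLabel a a' b' b u = 1) ∨
    (u.1 ≤ a'.1 ∧ b'.2 ≤ u.2 ∧ muLabel a a' b' b u = 2) ∨
    (b'.1 ≤ u.1 ∧ u.2 ≤ a'.2 ∧ muLabel a a' b' b u = 2) ∨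
    (b'.1 ≤ u.1 ∧ a'.2 < u.2 ∧ u.2 < b'.2 ∧
      muLabel a a' b' b u = (u.2 - a'.2 : ℤ) + (b'.1 - a'.1) + 1) ∨
    (a'.1 < u.1 ∧ u.1 < b'.1 ∧ b'.2 ≤ u.2 ∧
      muLabel a a' b' b u = (b'.1 - u.1 : ℤ) + (b'.1 - a'.1) + (b'.2 - a'.2)) ∨
    (u.1 ≤ a'.1 ∧ a'.2 < u.2 ∧ u.2 < b'.2 ∧
      muLabel a a' b' b u = (b'.2 - u.2 : ℤ) + 2 * (b'.1 - a'.1) + (b'.2 - a'.2) - 1) ∨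
    (a'.1 < u.1 ∧ u.1 < b'.1 ∧ u.2 ≤ a'.2 ∧ muLabel a a' b' b u = (u.1 - a'.1 : ℤ) + 2) := by
  simp only [vertexSet, Set.mem_ofPred_eq, strictLt] at hu h2
  have hreg : (u.1 ≤ a'.1 ∧ u.2 ≤ a'.2) ∨ (b'.1 ≤ u.1 ∧ b'.2 ≤ u.2) ∨
      (u.1 ≤ a'.1 ∧ b'.2 ≤ u.2) ∨ (b'.1 ≤ u.1 ∧ u.2 ≤ a'.2) ∨
      (b'.1 ≤ u.1 ∧ a'.2 < u.2 ∧ u.2 < b'.2) ∨ (a'.1 < u.1 ∧ u.1 < b'.1 ∧ b'.2 ≤ u.2) ∨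
      (u.1 ≤ a'.1 ∧ a'.2 < u.2 ∧ u.2 < b'.2) ∨ (a'.1 < u.1 ∧ u.1 < b'.1 ∧ u.2 ≤ a'.2) := by
    omega
  unfold muLabel
  rcases hreg with h | h | h | h | h | h | h | h
  · exact .inl ⟨h.1, h.2, by rw [if_pos (by omega)]⟩
  · exact .inr <| .inl ⟨h.1, h.2, by rw [if_neg (by omega), if_pos (by omega)]⟩
  · exact .inr <| .inr <| .inl
      ⟨h.1, h.2, by (iterate 2 rw [if_neg (by omega)]); rw [if_pos (by omega)]⟩
  · exact .inr <| .inr <| .inr <| .inl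
      ⟨h.1, h.2, by (iterate 3 rw [if_neg (by omega)]); rw [if_pos (by omega)]⟩
  · exact .inr <| .inr <| .inr <| .inr <| .inl
      ⟨h.1, h.2.1, h.2.2, by (iterate 4 rw [if_neg (by omega)]); rw [if_pos (by omega)]⟩
  · exact .inr <| .inr <| .inr <| .inr <| .inr <| .inl
      ⟨h.1, h.2.1, h.2.2, by (iterate 5 rw [if_neg (by omega)]); rw [if_pos (by omega)]⟩
  · exact .inr <| .inr <| .inr <| .inr <| .inr <| .inr <| .inl
      ⟨h.1, h.2.1, h.2.2, by (iterate 6 rw [if_neg (by omega)]); rw [if_pos (by omega)]⟩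
  · exact .inr <| .inr <| .inr <| .inr <| .inr <| .inr <| .inr
      ⟨h.1, h.2.1, h.2.2, by (iterate 7 rw [if_neg (by omega)]); rw [if_pos (by omega)]⟩

theorem muLabel_eq_of_snd_eq (h2 : strictLt a' b') {u w : ℕ × ℕ} (hu : u ∈ vertexSet a a' b' b)
    (hw : w ∈ vertexSet a a' b' b) (hx : SameSide a'.1 b'.1 u.1 w.1) (hy : u.2 = w.2) :
    muLabel a a' b' b u = muLabel a a' b' b w := by
  have := muLabel_spec h2 hu
  have := muLabel_spec h2 hw
  unfold SameSide strictLt at *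
  omega

theorem muLabel_eq_of_fst_eq (h2 : strictLt a' b') {u w : ℕ × ℕ} (hu : u ∈ vertexSet a a' b' b)
    (hw : w ∈ vertexSet a a' b' b) (hx : u.1 = w.1) (hy : SameSide a'.2 b'.2 u.2 w.2) :
    muLabel a a' b' b u = muLabel a a' b' b w := by
  have := muLabel_spec h2 hu
  have := muLabel_spec h2 hw
  unfold SameSide strictLt at *
  omega

theorem muLabel_cross (h2 : strictLt a' b') {u w : ℕ × ℕ} (hu : u ∈ vertexSet a a' b' b)
    (hw : w ∈ vertexSet a a' b' b) (h : ShareBand a' b' u w) :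
    (muLabel a a' b' b (u.1, w.2) = muLabel a a' b' b w ∧
      muLabel a a' b' b (w.1, u.2) = muLabel a a' b' b u) ∨
    (muLabel a a' b' b (u.1, w.2) = muLabel a a' b' b u ∧
      muLabel a a' b' b (w.1, u.2) = muLabel a a' b' b w) := by
  have hu' := mk_mem_vertexSet_of_shareBand hu hw h
  have hw' := mk_mem_vertexSet_of_shareBand hw hu h.symm
  rcases h with hx | hy
  · exact .inl ⟨muLabel_eq_of_snd_eq h2 hu' hw hx rfl,
      muLabel_eq_of_snd_eq h2 hw' hu (SameSide.symm hx) rfl⟩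
  · exact .inr ⟨muLabel_eq_of_fst_eq h2 hu' hu rfl (SameSide.symm hy),
      muLabel_eq_of_fst_eq h2 hw' hw rfl hy⟩

theorem sameSide_of_muLabel_eq (h2 : strictLt a' b') {u w : ℕ × ℕ}
    (hu : u ∈ vertexSet a a' b' b) (hw : w ∈ vertexSet a a' b' b) (hu' : ¬IsCorner a a' b' b u)
    (h : muLabel a a' b' b w = muLabel a a' b' b u) :
    (SameSide a'.1 b'.1 w.1 u.1 ∧ w.2 = u.2) ∨ (w.1 = u.1 ∧ SameSide a'.2 b'.2 w.2 u.2) := by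
  have := muLabel_spec h2 hu
  have := muLabel_spec h2 hw
  unfold IsCorner SameSide strictLt at *
  omega

theorem muLabel_spec_of_isCorner (h2 : strictLt a' b') {u : ℕ × ℕ}
    (hu : u ∈ vertexSet a a' b' b) (hc : IsCorner a a' b' b u) :
    (u.1 ≤ a'.1 ∧ u.2 ≤ a'.2 ∧ muLabel a a' b' b u = 1) ∨
    (b'.1 ≤ u.1 ∧ b'.2 ≤ u.2 ∧ muLabel a a' b' b u = 1) ∨
    (u.1 ≤ a'.1 ∧ b'.2 ≤ u.2 ∧ muLabel a a' b' b u = 2) ∨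
    (b'.1 ≤ u.1 ∧ u.2 ≤ a'.2 ∧ muLabel a a' b' b u = 2) := by
  have := muLabel_spec h2 hu
  unfold IsCorner strictLt at *
  omega

theorem sameSide_indicator_eq (h2 : strictLt a' b') {u v : ℕ × ℕ}
    (hu : u ∈ vertexSet a a' b' b) (hv : v ∈ vertexSet a a' b' b)
    (hu' : IsCorner a a' b' b u) (hv' : IsCorner a a' b' b v) :
    ((if SameSide a'.1 b'.1 v.1 u.1 then 1 else 0) + (if SameSide a'.2 b'.2 v.2 u.2 then 1 else 0)
      + if muLabel a a' b' b u = 3 - muLabel a a' b' b v then -1 else 0 : ℤ) =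
    if SameSide a'.1 b'.1 v.1 u.1 ∧ SameSide a'.2 b'.2 v.2 u.2 then 2 else 0 := by
  have := muLabel_spec_of_isCorner h2 hu hu'
  have := muLabel_spec_of_isCorner h2 hv hv'
  unfold SameSide strictLt at *
  split_ifs <;> omega

def vertexWeight (v : vertexSet a a' b' b) : Multiset (ℕ ⊕ ℕ ⊕ ℤ) :=
  {.inl v.1.1} + {.inr (.inl v.1.2)} + {.inr (.inr (muLabel a a' b' b v.1))}

theorem vertexWeight_add_vertexWeight_cross (h2 : strictLt a' b')
    {q r q' r' : vertexSet a a' b' b} (h : ShareBand a' b' q.1 r.1)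
    (hq' : q'.1 = (q.1.1, r.1.2)) (hr' : r'.1 = (r.1.1, q.1.2)) :
    vertexWeight q + vertexWeight r = vertexWeight q' + vertexWeight r' := by
  unfold vertexWeight
  rw [hq', hr']
  rcases muLabel_cross h2 q.2 r.2 h with ⟨e1, e2⟩ | ⟨e1, e2⟩ <;> rw [e1, e2] <;> abel

theorem exists_mem_of_bind_eq {M N : Multiset (vertexSet a a' b' b)}
    (h : M.bind vertexWeight = N.bind vertexWeight) {v : vertexSet a a' b' b} (hv : v ∈ M) :
    (∃ p ∈ N, p.1.1 = v.1.1) ∧ (∃ r ∈ N, r.1.2 = v.1.2) ∧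
      ∃ q ∈ N, muLabel a a' b' b q.1 = muLabel a a' b' b v.1 := by
  have key : ∀ t ∈ vertexWeight v, ∃ u ∈ N, t ∈ vertexWeight u := fun t ht =>
    Multiset.mem_bind.mp (h ▸ Multiset.mem_bind.mpr ⟨v, hv, ht⟩)
  obtain ⟨p, hp, hpx⟩ := key (.inl v.1.1) (by simp [vertexWeight])
  obtain ⟨r, hr, hry⟩ := key (.inr (.inl v.1.2)) (by simp [vertexWeight])
  obtain ⟨q, hq, hqμ⟩ := key (.inr (.inr (muLabel a a' b' b v.1))) (by simp [vertexWeight])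
  simp only [vertexWeight, Multiset.mem_add, Multiset.mem_singleton, reduceCtorEq, Sum.inl.injEq,
    Sum.inr.injEq, false_or, or_false] at hpx hry hqμ
  exact ⟨⟨p, hp, hpx.symm⟩, ⟨r, hr, hry.symm⟩, ⟨q, hq, hqμ.symm⟩⟩

theorem exists_mem_sameSide_of_isCorner (h2 : strictLt a' b')
    {M N : Multiset (vertexSet a a' b' b)} (hM : ∀ u ∈ M, IsCorner a a' b' b u.1)
    (hw : M.bind vertexWeight = N.bind vertexWeight) {v : vertexSet a a' b' b} (hv : v ∈ M) :
    ∃ w ∈ N, SameSide a'.1 b'.1 v.1.1 w.1.1 ∧ SameSide a'.2 b'.2 v.1.2 w.1.2 := by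
  have hN : ∀ u ∈ N, IsCorner a a' b' b u.1 := fun u hu => by
    obtain ⟨-, -, q, hq, hqμ⟩ := exists_mem_of_bind_eq hw.symm hu
    simpa only [IsCorner, hqμ] using hM q hq
  -- On corner vertices, `f` summed over `vertexWeight u` is `g u`, twice the indicator of the
  -- corner rectangle of `v`: `3 - μ v` is the label of the two corner rectangles adjacent to it.
  let f : ℕ ⊕ ℕ ⊕ ℤ → ℤ := Sum.elim (fun x => if SameSide a'.1 b'.1 v.1.1 x then 1 else 0)
    (Sum.elim (fun y => if SameSide a'.2 b'.2 v.1.2 y then 1 else 0)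
      fun m => if m = 3 - muLabel a a' b' b v.1 then -1 else 0)
  let g : vertexSet a a' b' b → ℤ := fun u =>
    if SameSide a'.1 b'.1 v.1.1 u.1.1 ∧ SameSide a'.2 b'.2 v.1.2 u.1.2 then 2 else 0
  have hfg {L : Multiset (vertexSet a a' b' b)} (hL : ∀ u ∈ L, IsCorner a a' b' b u.1) :
      ((L.bind vertexWeight).map f).sum = (L.map g).sum := by
    rw [Multiset.map_bind, Multiset.sum_bind]
    refine congrArg Multiset.sum (Multiset.map_congr rfl fun u hu => ?_)
    simpa [vertexWeight, f, g, add_assoc] using sameSide_indicator_eq h2 u.2 v.2 (hL u hu) (hM v hv)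
  have hsum : (M.map g).sum = (N.map g).sum := by rw [← hfg hM, ← hfg hN, hw]
  by_contra hno
  push Not at hno
  have hN0 : (N.map g).sum = 0 := Multiset.sum_eq_zero fun _ hz => by
    obtain ⟨u, hu, rfl⟩ := Multiset.mem_map.mp hz
    exact if_neg fun h => hno u hu h.1 h.2
  have hgv : g v ≤ (M.map g).sum := Multiset.single_le_sum (fun _ hz => by
    obtain ⟨u, -, rfl⟩ := Multiset.mem_map.mp hz
    unfold g; split_ifs <;> norm_num) _ (Multiset.mem_map_of_mem g hv)
  have hv2 : g v = 2 := by
    have := muLabel_spec_of_isCorner h2 v.2 (hM v hv)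
    exact if_pos (by unfold SameSide; omega)
  omega

section Ideal

variable (K : Type*) [Field K]

noncomputable def monomialClass (M : Multiset (vertexSet a a' b' b)) :
    MvPolynomial (vertexSet a a' b' b) K ⧸ polyominoIdeal K a a' b' b :=
  Ideal.Quotient.mk _ (M.map X).prod

def Congruent (M N : Multiset (vertexSet a a' b' b)) : Prop :=
  M.bind vertexWeight = N.bind vertexWeight ∧ monomialClass K M = monomialClass K N

variable {K}

theorem phiMap_X (v : vertexSet a a' b' b) :
    phiMap K a a' b' b (X v) = ((vertexWeight v).map X).prod := by
  simp [phiMap, vertexWeight, mul_assoc]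

theorem monomialClass_cons (v : vertexSet a a' b' b) (M : Multiset (vertexSet a a' b' b)) :
    monomialClass K (v ::ₘ M) = Ideal.Quotient.mk _ (X v) * monomialClass K M := by
  simp [monomialClass]

theorem Congruent.trans {M N T : Multiset (vertexSet a a' b' b)} (h : Congruent K M N)
    (h' : Congruent K N T) : Congruent K M T :=
  ⟨h.1.trans h'.1, h.2.trans h'.2⟩

theorem mk_X_mul_X_eq_of_isInnerInterval {c d c' d' : vertexSet a a' b' b}
    (h : isInnerInterval a a' b' b c.1 d.1) (hc' : c'.1 = (c.1.1, d.1.2))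
    (hd' : d'.1 = (d.1.1, c.1.2)) :
    Ideal.Quotient.mk (polyominoIdeal K a a' b' b) (X c * X d) =
      Ideal.Quotient.mk (polyominoIdeal K a a' b' b) (X c' * X d') :=
  Ideal.Quotient.eq.mpr (Ideal.subset_span ⟨c, d, c', d', h, hc', hd', rfl⟩)

theorem mk_X_mul_X_eq_cross {q r q' r' : vertexSet a a' b' b}
    (h : ShareBand a' b' q.1 r.1) (hq' : q'.1 = (q.1.1, r.1.2)) (hr' : r'.1 = (r.1.1, q.1.2)) :
    Ideal.Quotient.mk (polyominoIdeal K a a' b' b) (X q * X r) =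
      Ideal.Quotient.mk (polyominoIdeal K a a' b' b) (X q' * X r') := by
  have key (c d c' d' : vertexSet a a' b' b) (hx : c.1.1 < d.1.1) (hy : c.1.2 < d.1.2)
      (h : ShareBand a' b' c.1 d.1) (hc' : c'.1 = (c.1.1, d.1.2)) (hd' : d'.1 = (d.1.1, c.1.2)) :
      Ideal.Quotient.mk (polyominoIdeal K a a' b' b) (X c * X d) =
        Ideal.Quotient.mk (polyominoIdeal K a a' b' b) (X c' * X d') :=
    mk_X_mul_X_eq_of_isInnerInterval (isInnerInterval_of_shareBand c.2 d.2 hx hy h) hc' hd'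
  obtain ⟨⟨x, y⟩, hq⟩ := q
  obtain ⟨⟨x', y'⟩, hr⟩ := r
  obtain ⟨_, hqr⟩ := q'
  obtain ⟨_, hrq⟩ := r'
  dsimp only at hq' hr' h
  subst hq' hr'
  unfold ShareBand SameSide at h
  rcases lt_trichotomy x x' with hx | rfl | hx <;> rcases lt_trichotomy y y' with hy | rfl | hy
  · exact key _ _ _ _ hx hy (by unfold ShareBand SameSide; dsimp only; omega) rfl rfl
  · rfl
  · exact (key ⟨_, hqr⟩ ⟨_, hrq⟩ ⟨_, hq⟩ ⟨_, hr⟩ hx hy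
      (by unfold ShareBand SameSide; dsimp only; omega) rfl rfl).symm
  · rw [mul_comm]
  · rfl
  · rw [mul_comm]
  · simpa only [mul_comm] using (key ⟨_, hrq⟩ ⟨_, hqr⟩ ⟨_, hr⟩ ⟨_, hq⟩ hx hy
      (by unfold ShareBand SameSide; dsimp only; omega) rfl rfl).symm
  · rfl
  · simpa only [mul_comm] using key ⟨_, hr⟩ ⟨_, hq⟩ ⟨_, hrq⟩ ⟨_, hqr⟩ hx hy
      (by unfold ShareBand SameSide; dsimp only; omega) rfl rfl

theorem congruent_cons_cons_cross (h2 : strictLt a' b') {q r q' r' : vertexSet a a' b' b}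
    (h : ShareBand a' b' q.1 r.1) (hq' : q'.1 = (q.1.1, r.1.2)) (hr' : r'.1 = (r.1.1, q.1.2))
    (R : Multiset (vertexSet a a' b' b)) :
    Congruent K (q ::ₘ r ::ₘ R) (q' ::ₘ r' ::ₘ R) := by
  refine ⟨?_, ?_⟩
  · simp only [Multiset.cons_bind, ← add_assoc, vertexWeight_add_vertexWeight_cross h2 h hq' hr']
  · simp only [monomialClass_cons, ← mul_assoc, ← map_mul, mk_X_mul_X_eq_cross h hq' hr']

theorem exists_congruent_mem_of_shareBand (h2 : strictLt a' b')
    {T : Multiset (vertexSet a a' b' b)} {p q v : vertexSet a a' b' b} (hp : p ∈ T) (hq : q ∈ T)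
    (h : ShareBand a' b' p.1 q.1) (hv : v.1 = (p.1.1, q.1.2)) :
    ∃ T', Congruent K T T' ∧ v ∈ T' := by
  obtain rfl | hpq := eq_or_ne p q
  · exact ⟨T, ⟨rfl, rfl⟩, Subtype.ext hv ▸ hp⟩
  obtain ⟨T₁, rfl⟩ := Multiset.exists_cons_of_mem hp
  obtain ⟨R, rfl⟩ := Multiset.exists_cons_of_mem
    ((Multiset.mem_cons.mp hq).resolve_left hpq.symm)
  exact ⟨_, congruent_cons_cons_cross (r' := ⟨(q.1.1, p.1.2),
    mk_mem_vertexSet_of_shareBand q.2 p.2 h.symm⟩) h2 h hv rfl R, Multiset.mem_cons_self _ _⟩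

theorem exists_congruent_mem_of_not_isCorner (h2 : strictLt a' b')
    {M N : Multiset (vertexSet a a' b' b)} (hw : M.bind vertexWeight = N.bind vertexWeight)
    {v : vertexSet a a' b' b} (hv : v ∈ M) (hs : ¬IsCorner a a' b' b v.1) :
    ∃ T, Congruent K N T ∧ v ∈ T := by
  obtain ⟨⟨p, hp, hpx⟩, ⟨r, hr, hry⟩, q, hq, hqμ⟩ := exists_mem_of_bind_eq hw hv
  rcases sameSide_of_muLabel_eq h2 v.2 q.2 hs hqμ with ⟨hx, hy⟩ | ⟨hx, hy⟩
  · exact exists_congruent_mem_of_shareBand h2 hp hq (.inl (hpx ▸ hx.symm)) (by rw [hpx, hy])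
  · exact exists_congruent_mem_of_shareBand h2 hq hr (.inr (hry ▸ hy)) (by rw [hx, hry])

theorem exists_congruent_mem_of_isCorner (h2 : strictLt a' b')
    {M N : Multiset (vertexSet a a' b' b)} (hw : M.bind vertexWeight = N.bind vertexWeight)
    (hM : ∀ u ∈ M, IsCorner a a' b' b u.1) {v : vertexSet a a' b' b} (hv : v ∈ M) :
    ∃ T, Congruent K N T ∧ v ∈ T := by
  obtain ⟨⟨p, hp, hpx⟩, -, -⟩ := exists_mem_of_bind_eq hw hv
  obtain ⟨w, hw', hwx, hwy⟩ := exists_mem_sameSide_of_isCorner h2 hM hw hv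
  have hpw : ShareBand a' b' p.1 w.1 := .inl (hpx ▸ hwx)
  let c : vertexSet a a' b' b := ⟨(v.1.1, w.1.2), hpx ▸ mk_mem_vertexSet_of_shareBand p.2 w.2 hpw⟩
  obtain ⟨T₁, hT₁, hc⟩ := exists_congruent_mem_of_shareBand (K := K) (v := c) h2 hp hw' hpw
    (by rw [hpx])
  obtain ⟨-, ⟨r, hr, hry⟩, -⟩ := exists_mem_of_bind_eq (hw.trans hT₁.1) hv
  obtain ⟨T₂, hT₂, hv₂⟩ := exists_congruent_mem_of_shareBand (K := K) (v := v) h2 hc hr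
    (.inr (hry ▸ hwy.symm)) (by rw [hry])
  exact ⟨T₂, hT₁.trans hT₂, hv₂⟩

theorem exists_mem_congruent_mem (h2 : strictLt a' b') {M N : Multiset (vertexSet a a' b' b)}
    (hw : M.bind vertexWeight = N.bind vertexWeight) (hM : M ≠ 0) :
    ∃ v ∈ M, ∃ T, Congruent K N T ∧ v ∈ T := by
  by_cases hs : ∃ v ∈ M, ¬IsCorner a a' b' b v.1
  · obtain ⟨v, hv, hs⟩ := hs
    exact ⟨v, hv, exists_congruent_mem_of_not_isCorner h2 hw hv hs⟩
  · push Not at hs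
    obtain ⟨v, hv⟩ := Multiset.exists_mem_of_ne_zero hM
    exact ⟨v, hv, exists_congruent_mem_of_isCorner h2 hw hs hv⟩

theorem monomialClass_eq_of_bind_eq (h2 : strictLt a' b') (M N : Multiset (vertexSet a a' b' b))
    (hw : M.bind vertexWeight = N.bind vertexWeight) : monomialClass K M = monomialClass K N := by
  induction M using Multiset.strongInductionOn generalizing N with
  | ih M ih =>
  obtain rfl | hM := eq_or_ne M 0
  · obtain rfl : N = 0 := Multiset.eq_zero_of_forall_notMem fun u hu => by
      simpa using (exists_mem_of_bind_eq hw.symm hu).1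
    rfl
  obtain ⟨v, hv, T, hT, hvT⟩ := exists_mem_congruent_mem (K := K) h2 hw hM
  obtain ⟨M', rfl⟩ := Multiset.exists_cons_of_mem hv
  obtain ⟨T', rfl⟩ := Multiset.exists_cons_of_mem hvT
  have hw' : M'.bind vertexWeight = T'.bind vertexWeight := by
    simpa only [Multiset.cons_bind, add_right_inj] using hw.trans hT.1
  rw [hT.2, monomialClass_cons, monomialClass_cons,
    ih M' (Multiset.lt_cons_self M' v) T' hw']

theorem polyominoIdeal_le_ker (h2 : strictLt a' b') :
    polyominoIdeal K a a' b' b ≤ RingHom.ker (phiMap K a a' b' b) := by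
  refine Ideal.span_le.mpr ?_
  rintro _ ⟨c, d, c', d', hcd, hc', hd', rfl⟩
  have hw := vertexWeight_add_vertexWeight_cross h2 (shareBand_of_isInnerInterval h2 hcd) hc' hd'
  rw [SetLike.mem_coe, RingHom.mem_ker, map_sub, sub_eq_zero, map_mul, map_mul, phiMap_X,
    phiMap_X, phiMap_X, phiMap_X, ← Multiset.prod_add, ← Multiset.prod_add, ← Multiset.map_add,
    ← Multiset.map_add, hw]

theorem ker_le_polyominoIdeal (h2 : strictLt a' b') :
    RingHom.ker (phiMap K a a' b' b) ≤ polyominoIdeal K a a' b' b :=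
  MvPolynomial.ker_le_of_weight_eq phiMap_X (monomialClass_eq_of_bind_eq h2)

end Ideal

end RectMinusRect

theorem stmt5_general {K : Type*} [Field K] (a a' b' b : ℕ × ℕ)
    (h2 : strictLt a' b') :
    polyominoIdeal K a a' b' b = RingHom.ker (phiMap K a a' b' b) ∧
      (polyominoIdeal K a a' b' b).IsPrime ∧
      Nonempty ((MvPolynomial (vertexSet a a' b' b) K ⧸ polyominoIdeal K a a' b' b)
        ≃ₐ[K] (phiMap K a a' b' b).range) := by
  have hI : polyominoIdeal K a a' b' b = RingHom.ker (phiMap K a a' b' b) :=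
    le_antisymm (RectMinusRect.polyominoIdeal_le_ker h2) (RectMinusRect.ker_le_polyominoIdeal h2)
  exact ⟨hI, hI ▸ RingHom.ker_isPrime _,
    ⟨(Ideal.quotientEquivAlgOfEq K hI).trans (Ideal.quotientKerEquivRange _)⟩⟩

/-- main theorem: for `P = P_{(a,b)} \ P_{(a',b')}` with `a < a' < b' < b`,
the polyomino ideal `I_P` equals the toric ideal `J_P = ker φ`; in particular `I_P` is
prime and `K[P] = S/I_P` is isomorphic to the toric ring
`K[r_{v₁}s_{v₂}t_{μ(v)} : v ∈ V(P)]`, i.e. the image of `φ`. -/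
theorem stmt5 {K : Type*} [Field K] (a a' b' b : ℕ × ℕ)
    (h1 : strictLt a a') (h2 : strictLt a' b') (h3 : strictLt b' b) :
    polyominoIdeal K a a' b' b = RingHom.ker (phiMap K a a' b' b) ∧
      (polyominoIdeal K a a' b' b).IsPrime ∧
      Nonempty ((MvPolynomial (vertexSet a a' b' b) K ⧸ polyominoIdeal K a a' b' b)
        ≃ₐ[K] (phiMap K a a' b' b).range) :=
  stmt5_general a a' b' b h2
end

section
/- Let P = P_{(a,b)} \ P_{(a',b')} with a < a' < b' < b and labelling μ. For any two vertices u, v ∈ V(P) with u ≠ v and μ(u) = μ(v) = 1, one in the lower-left and one in the upper-right corner rectangle, the interval [u, v] (or [v, u]) spanned by them is not an inner interval of P, since it contains the removed rectangle. -/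
open MvPolynomial

/-- if `u` lies in the lower-left label-1 rectangle `[a₁,a'₁]×[a₂,a'₂]` and
`v` lies in the upper-right label-1 rectangle `[b'₁,b₁]×[b'₂,b₂]`, then the interval
`[u,v]` contains every cell of the removed rectangle `[a',b']`, and hence `[u,v]` is NOT
an inner interval of `P`. -/
theorem stmt7 (a a' b' b : ℕ × ℕ)
    (h1 : strictLt a a') (h2 : strictLt a' b') (h3 : strictLt b' b)
    (u v : ℕ × ℕ) (hu : u ∈ vertexSet a a' b' b) (hv : v ∈ vertexSet a a' b' b)
    (hu1 : a.1 ≤ u.1) (hu2 : u.1 ≤ a'.1) (hu3 : a.2 ≤ u.2) (hu4 : u.2 ≤ a'.2)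
    (hv1 : b'.1 ≤ v.1) (hv2 : v.1 ≤ b.1) (hv3 : b'.2 ≤ v.2) (hv4 : v.2 ≤ b.2) :
    (∀ w : ℕ × ℕ, isCellOf a' b' w → isCellOf u v w) ∧
      ¬ isInnerInterval a a' b' b u v := by
  obtain ⟨h21, h22⟩ := h2
  constructor
  · rintro w ⟨w1, w2, w3, w4⟩; exact ⟨by omega, by omega, by omega, by omega⟩
  · rintro ⟨_, _, hIn⟩
    exact (hIn a' ⟨by omega, by omega, by omega, by omega⟩).2 ⟨le_refl _, h21, le_refl _, h22⟩
end

section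
/- Let P = P_{(a,b)} \ P_{(a',b')} with a < a' < b' < b and labelling μ. If u, v ∈ V(P) satisfy μ(u) = μ(v) = 2 with u in the upper-left corner rectangle and v in the lower-right corner rectangle, then the anti-diagonal corners (u₁, v₂) and (v₁, u₂) of the rectangle they span have label 1, and the corresponding 2-minor x_{(u₁,v₂)}x_{(v₁,u₂)} − x_u x_v maps to r_{u₁}r_{v₁}s_{u₂}s_{v₂}(t₁² − t₂²) ≠ 0 under φ; i.e., this binomial is not in ker φ. -/
open MvPolynomial

/-- if `u` lies in the upper-left label-2 rectangle and `v` in the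
lower-right label-2 rectangle, then the anti-diagonal corners `w = (u₁,v₂)` and
`z = (v₁,u₂)` of the rectangle spanned by `u` and `v` carry label `1`, and the 2-minor
`x_w x_z - x_u x_v` maps under `φ` to `r_{u₁}r_{v₁}s_{u₂}s_{v₂}(t₁² - t₂²) ≠ 0`; in
particular this binomial is not in `ker φ`. -/
theorem stmt8 {K : Type*} [Field K] (a a' b' b : ℕ × ℕ)
    (h1 : strictLt a a') (h2 : strictLt a' b') (h3 : strictLt b' b)
    (u v w z : vertexSet a a' b' b)
    (hu1 : a.1 ≤ u.1.1) (hu2 : u.1.1 ≤ a'.1) (hu3 : b'.2 ≤ u.1.2) (hu4 : u.1.2 ≤ b.2)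
    (hv1 : b'.1 ≤ v.1.1) (hv2 : v.1.1 ≤ b.1) (hv3 : a.2 ≤ v.1.2) (hv4 : v.1.2 ≤ a'.2)
    (hw : w.1 = (u.1.1, v.1.2)) (hz : z.1 = (v.1.1, u.1.2)) :
    muLabel a a' b' b w.1 = 1 ∧ muLabel a a' b' b z.1 = 1 ∧
      phiMap K a a' b' b (X w * X z - X u * X v) =
        X (Sum.inl u.1.1) * X (Sum.inl v.1.1) * X (Sum.inr (Sum.inl u.1.2)) *
          X (Sum.inr (Sum.inl v.1.2)) *
          (X (Sum.inr (Sum.inr (1 : ℤ))) ^ 2 - X (Sum.inr (Sum.inr (2 : ℤ))) ^ 2) ∧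
      phiMap K a a' b' b (X w * X z - X u * X v) ≠ 0 := by
  obtain ⟨h1a, h1b⟩ := h1
  obtain ⟨h2a, h2b⟩ := h2
  obtain ⟨h3a, h3b⟩ := h3
  have hwmu : muLabel a a' b' b w.1 = 1 := by
    rw [hw]; unfold muLabel; rw [if_pos ⟨hu1, hu2, hv3, hv4⟩]
  have hzmu : muLabel a a' b' b z.1 = 1 := by
    rw [hz]; unfold muLabel
    rw [if_neg (by push_neg; intro _ h; omega), if_pos ⟨hv1, hv2, hu3, hu4⟩]
  have humu : muLabel a a' b' b u.1 = 2 := by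
    unfold muLabel
    rw [if_neg (by push_neg; intro _ _ _; omega),
        if_neg (by push_neg; intro h; omega),
        if_pos ⟨hu1, hu2, hu3, hu4⟩]
  have hvmu : muLabel a a' b' b v.1 = 2 := by
    unfold muLabel
    rw [if_neg (by push_neg; intro h; omega),
        if_neg (by push_neg; intro _ _ _; omega),
        if_neg (by push_neg; intro h; omega),
        if_pos ⟨hv1, hv2, hv3, hv4⟩]
  have hphi : phiMap K a a' b' b (X w * X z - X u * X v) =
      X (Sum.inl u.1.1) * X (Sum.inl v.1.1) * X (Sum.inr (Sum.inl u.1.2)) *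
        X (Sum.inr (Sum.inl v.1.2)) *
        (X (Sum.inr (Sum.inr (1 : ℤ))) ^ 2 - X (Sum.inr (Sum.inr (2 : ℤ))) ^ 2) := by
    simp only [phiMap, map_sub, map_mul, aeval_X]
    rw [hwmu, hzmu, humu, hvmu, hw, hz]
    ring
  refine ⟨hwmu, hzmu, hphi, ?_⟩
  rw [hphi]
  refine mul_ne_zero (mul_ne_zero (mul_ne_zero (mul_ne_zero (X_ne_zero _) (X_ne_zero _))
    (X_ne_zero _)) (X_ne_zero _)) ?_
  intro h
  have := congrArg (coeff (Finsupp.single (Sum.inr (Sum.inr (1:ℤ)) : ℕ ⊕ ℕ ⊕ ℤ) 2)) h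
  rw [coeff_zero, coeff_sub, coeff_X_pow, coeff_X_pow] at this
  simp [Finsupp.single_eq_single_iff] at this
end
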